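/- A finite dimensional algebra over a field is simple if and only if there exists a faithful simple module over it. -/

import Mathlib

/-!
Over a simple ring the annihilator of a nonzero module is a proper two-sided ideal, hence zero,
so every simple module (e.g. `A ⧸ m` for a maximal left ideal `m`) is faithful.

Conversely, the Jacobson radical annihilates every simple module, so a faithful simple module `M`
forces it to vanish, and the Artinian ring `A` is semisimple. Every minimal left ideal `I` acts
nontrivially on `M`, so by Schur's lemma `I ≅ M`: `A` is isotypic, and a semisimple isotypic ring
is simple.
-/

theorem exists_isSimpleModule_quotient (R : Type*) [Ring R] [Nontrivial R] :
    ∃ m : Ideal R, IsSimpleModule R (R ⧸ m) :=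
  have ⟨m, hm⟩ := Ideal.exists_maximal R
  ⟨m, isSimpleModule_iff_isCoatom.mpr (Ideal.isMaximal_def.mp hm)⟩

section

variable {R : Type*} (M : Type*) [Ring R] [AddCommGroup M] [Module R M]

theorem IsSimpleRing.faithfulSMul [IsSimpleRing R] [Nontrivial M] : FaithfulSMul R M :=
  Module.annihilator_eq_bot.mp <|
    ((isSimpleRing_iff_isTwoSided_imp.mp ‹_›).2 _ inferInstance).resolve_right
      fun h ↦ not_subsingleton M (Module.annihilator_eq_top_iff.mp h)

theorem IsSemisimpleRing.of_faithfulSMul [IsArtinianRing R] [IsSemisimpleModule R M]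
    [FaithfulSMul R M] : IsSemisimpleRing R :=
  IsArtinianRing.isSemisimpleRing_iff_jacobson.mpr <| eq_bot_iff.mpr <|
    (IsSemisimpleModule.jacobson_le_annihilator R M).trans_eq (Module.annihilator_eq_bot.mpr ‹_›)

theorem isIsotypicOfType_self_of_faithfulSMul [IsSimpleModule R M] [FaithfulSMul R M] :
    IsIsotypicOfType R R M := by
  intro I _
  have := IsSimpleModule.nontrivial R I
  obtain ⟨r, hr⟩ := exists_ne (0 : I)
  obtain ⟨x, hx⟩ : ∃ x : M, (r : R) • x ≠ 0 := by
    by_contra! h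
    exact hr (Subtype.ext (eq_of_smul_eq_smul (α := M) fun x ↦ by simp [h x]))
  have hf : LinearMap.toSpanSingleton R M x ∘ₗ I.subtype ≠ 0 := fun h ↦ hx congr($h r)
  exact ⟨.ofBijective _ (LinearMap.bijective_of_ne_zero hf)⟩

theorem IsSimpleRing.of_faithfulSMul [IsArtinianRing R] [IsSimpleModule R M]
    [FaithfulSMul R M] : IsSimpleRing R :=
  have := IsSimpleModule.nontrivial R M
  have := Module.nontrivial R M
  (isSimpleRing_isArtinianRing_iff.mpr ⟨.of_faithfulSMul M,
    (isIsotypicOfType_self_of_faithfulSMul M).isIsotypic, inferInstance⟩).1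

end

theorem stmt0.{u} (K : Type*) (A : Type u) [Field K] [Ring A] [Algebra K A]
    [FiniteDimensional K A] :
    IsSimpleRing A ↔
      ∃ (M : Type u) (_ : AddCommGroup M) (_ : Module A M),
        IsSimpleModule A M ∧ FaithfulSMul A M := by
  constructor
  · intro _
    obtain ⟨m, _⟩ := exists_isSimpleModule_quotient A
    have := IsSimpleModule.nontrivial A (A ⧸ m)
    exact ⟨A ⧸ m, _, _, inferInstance, IsSimpleRing.faithfulSMul _⟩
  · rintro ⟨M, _, _, _, _⟩
    have := IsArtinianRing.of_finite K A
    exact IsSimpleRing.of_faithfulSMul M
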